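/- Let $X$ be a free abelian group of finite rank with an action of a finite group $\theta$, and let $\check{X} = \mathrm{Hom}(X, \mathbb{Z})$ with the dual action. Set $\underline{X} = X_\theta / \mathrm{torsion}$ (coinvariants modulo torsion) and $\check{\underline{X}} = \check{X}^\theta$ (invariants). Then the canonical pairing $(\underline{x}, y) \mapsto \langle x, y \rangle$, for $\underline{x} \in \underline{X}$ with preimage $x \in X$ and $y \in \check{\underline{X}} \subseteq \check{X}$, is well-defined and exhibits $\underline{X}$ and $\check{\underline{X}}$ as free abelian groups in perfect duality. -/

import Mathlib

/-!
An invariant functional on `X` is the same as a functional vanishing on the span `N` of the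
elements `x - t • x`, i.e. a functional on the coinvariants `X ⧸ N`; since `ℤ` is torsion-free,
such a functional also kills the torsion. Hence `X̲̌ ≃ Dual ℤ X̲`, and as `X̲` is finitely generated
and torsion-free, hence free of finite rank, it is reflexive, so the pairing is perfect.
-/

open Module Submodule

section Dual

variable {R M N θ : Type*} [CommRing R] [AddCommGroup M] [Module R M]

theorem Submodule.mem_dualAnnihilator_span_sub_iff (ρ : θ → M ≃ₗ[R] M) (f : Dual R M) :
    f ∈ (span R {y | ∃ t x, y = x - ρ t x}).dualAnnihilator ↔ ∀ t x, f (ρ t x) = f x := by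
  rw [← SetLike.mem_coe, coe_dualAnnihilator_span]
  refine ⟨fun h t x ↦ ?_, ?_⟩
  · exact (sub_eq_zero.1 (by simpa using h ⟨t, x, rfl⟩)).symm
  · rintro h _ ⟨t, x, rfl⟩
    simp [h]

theorem Submodule.torsion_le_ker [AddCommGroup N] [Module R N] [IsTorsionFree R N]
    (f : M →ₗ[R] N) : torsion R M ≤ LinearMap.ker f := by
  rintro x ⟨a, hax⟩
  refine IsTorsionFree.isSMulRegular (isRegular_iff_mem_nonZeroDivisors.2 a.2)
    (show (a : R) • f x = (a : R) • 0 from ?_)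
  rw [smul_zero, ← map_smul, ← Submonoid.smul_def, hax, map_zero]

theorem Submodule.dualAnnihilator_torsion :
    (torsion R M).dualAnnihilator = ⊤ :=
  eq_top_iff.2 fun f _ ↦ (mem_dualAnnihilator f).2 fun _ hx ↦ torsion_le_ker f hx

noncomputable def Submodule.dualQuotTorsionEquiv : Dual R (M ⧸ torsion R M) ≃ₗ[R] Dual R M :=
  (torsion R M).dualQuotEquivDualAnnihilator.trans (.ofTop _ dualAnnihilator_torsion)

end Dual

theorem stmt5_general {X : Type*} [AddCommGroup X] [Module ℤ X]
    [Module.Finite ℤ X]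
    {θ : Type*} [Group θ] (ρ : θ →* (X ≃ₗ[ℤ] X))
    (N : Submodule ℤ X)
    (hN : N = Submodule.span ℤ {y : X | ∃ (t : θ) (x : X), y = x - ρ t x})
    (Inv : Submodule ℤ (X →ₗ[ℤ] ℤ))
    (hInv : ∀ f : X →ₗ[ℤ] ℤ, f ∈ Inv ↔ ∀ (t : θ) (x : X), f (ρ t x) = f x) :
    ∃ p : ((X ⧸ N) ⧸ Submodule.torsion ℤ (X ⧸ N)) →ₗ[ℤ] (↥Inv →ₗ[ℤ] ℤ),
      (∀ (x : X) (f : ↥Inv),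
        p (Submodule.Quotient.mk (Submodule.Quotient.mk x)) f = f.1 x) ∧
      Function.Bijective p ∧ Function.Bijective p.flip := by
  -- The statement gives `X ⧸ N` the ℤ-module structure `AddCommGroup.toIntModule`; with the
  -- canonical structure on `X` it agrees definitionally with the quotient structure.
  obtain rfl : ‹Module ℤ X› = AddCommGroup.toIntModule X := Subsingleton.elim _ _
  have hInv_eq : Inv = N.dualAnnihilator := by
    ext f
    rw [hInv, hN, mem_dualAnnihilator_span_sub_iff]
  have : Module.Free ℤ ((X ⧸ N) ⧸ torsion ℤ (X ⧸ N)) := Module.free_of_finite_type_torsion_free'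
  let E : Inv ≃ₗ[ℤ] Dual ℤ ((X ⧸ N) ⧸ torsion ℤ (X ⧸ N)) :=
    (LinearEquiv.ofEq _ _ hInv_eq).trans
      (N.dualQuotEquivDualAnnihilator.symm.trans dualQuotTorsionEquiv.symm)
  have : E.toLinearMap.IsPerfPair := .of_bijective _ E.bijective
  exact ⟨E.toLinearMap.flip, fun _ _ ↦ rfl, LinearMap.IsPerfPair.bijective_right _,
    E.bijective⟩

/-- For a free abelian group `X` of finite rank with an action of
a finite group `θ`, with `X̲ = X_θ/torsion` and `X̲̌ = (X̌)^θ` (invariants of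
the dual), the canonical pairing `(x̲, y) ↦ ⟨x, y⟩` is well defined and is a
perfect duality between the free abelian groups `X̲` and `X̲̌`. -/
theorem stmt5 {X : Type*} [AddCommGroup X] [Module ℤ X]
    [Module.Free ℤ X] [Module.Finite ℤ X]
    {θ : Type*} [Group θ] [Finite θ] (ρ : θ →* (X ≃ₗ[ℤ] X))
    (N : Submodule ℤ X)
    (hN : N = Submodule.span ℤ {y : X | ∃ (t : θ) (x : X), y = x - ρ t x})
    (Inv : Submodule ℤ (X →ₗ[ℤ] ℤ))
    (hInv : ∀ f : X →ₗ[ℤ] ℤ, f ∈ Inv ↔ ∀ (t : θ) (x : X), f (ρ t x) = f x) :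
    ∃ p : ((X ⧸ N) ⧸ Submodule.torsion ℤ (X ⧸ N)) →ₗ[ℤ] (↥Inv →ₗ[ℤ] ℤ),
      (∀ (x : X) (f : ↥Inv),
        p (Submodule.Quotient.mk (Submodule.Quotient.mk x)) f = f.1 x) ∧
      Function.Bijective p ∧ Function.Bijective p.flip :=
  stmt5_general ρ N hN Inv hInv
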